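/- Let N_f ≥ 3 be an odd integer, m = (N_f − 1)/2, and q ∈ [0, 1/2]. Then Σ_{i=m+1}^{N_f} C(N_f, i)·qⁱ·(1−q)^{N_f−i} ≤ q, where C(N_f, i) denotes the binomial coefficient. -/

import Mathlib

/-!
Write `b ν = C(n, ν) q^ν (1 - q)^(n - ν)`. The binomial mean `∑ ν b ν = n q` reduces the claim
to `∑_{ν > m} (n - ν) b ν ≤ ∑_{ν ≤ m} ν b ν`. The reflection `ν ↦ n - ν` carries the left sum
onto part of the right one, because `b ν` at `1 - q` is `b (n - ν)` at `q`, while for `ν > m`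
(so `n - ν ≤ ν`) and `q ≤ 1/2` the weight `q^ν (1 - q)^(n - ν)` only grows when `q` is replaced
by `1 - q`.
-/

open Finset Polynomial

theorem pow_mul_pow_le_pow_mul_pow {R : Type*} [CommSemiring R] [PartialOrder R]
    [IsOrderedRing R] {a b : R} (ha : 0 ≤ a) (hab : a ≤ b) {k l : ℕ} (hkl : k ≤ l) :
    a ^ l * b ^ k ≤ a ^ k * b ^ l := by
  obtain ⟨d, rfl⟩ := Nat.exists_eq_add_of_le hkl
  calc a ^ (k + d) * b ^ k = (a * b) ^ k * a ^ d := by ring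
    _ ≤ (a * b) ^ k * b ^ d := by
        gcongr
        exact pow_nonneg (mul_nonneg ha (ha.trans hab)) k
    _ = a ^ k * b ^ (k + d) := by ring

namespace bernsteinPolynomial

variable {R : Type*} [CommRing R]

theorem eval_one_sub (n ν : ℕ) (h : ν ≤ n) (x : R) :
    (bernsteinPolynomial R n ν).eval (1 - x) = (bernsteinPolynomial R n (n - ν)).eval x := by
  rw [← flip R n ν h, eval_comp, eval_sub, eval_one, eval_X]

theorem sum_natCast_mul_eval (n : ℕ) (x : R) :
    ∑ ν ∈ range (n + 1), (ν : R) * (bernsteinPolynomial R n ν).eval x = n * x := by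
  simpa [eval_finsetSum, nsmul_eq_mul] using congrArg (eval x) (sum_smul R n)

variable [PartialOrder R] [IsOrderedRing R]

theorem eval_nonneg (n ν : ℕ) {x : R} (hx₀ : 0 ≤ x) (hx₁ : x ≤ 1) :
    0 ≤ (bernsteinPolynomial R n ν).eval x := by
  simp only [bernsteinPolynomial, eval_mul, eval_pow, eval_natCast, eval_sub, eval_one, eval_X]
  have : 0 ≤ 1 - x := sub_nonneg.mpr hx₁
  positivity

theorem eval_le_eval_one_sub {n ν : ℕ} (hν : n ≤ 2 * ν) {x : R} (hx₀ : 0 ≤ x)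
    (hx : x ≤ 1 - x) :
    (bernsteinPolynomial R n ν).eval x ≤ (bernsteinPolynomial R n ν).eval (1 - x) := by
  simp only [bernsteinPolynomial, eval_mul, eval_pow, eval_natCast, eval_sub, eval_one, eval_X,
    sub_sub_cancel, mul_assoc]
  exact mul_le_mul_of_nonneg_left
    ((pow_mul_pow_le_pow_mul_pow hx₀ hx (by omega)).trans_eq (mul_comm _ _)) (Nat.cast_nonneg _)

theorem sum_Icc_sub_mul_eval_le {n m : ℕ} (hn : n ≤ 2 * m + 1) {x : R} (hx₀ : 0 ≤ x)
    (hx : x ≤ 1 - x) :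
    ∑ ν ∈ Icc (m + 1) n, ((n - ν : ℕ) : R) * (bernsteinPolynomial R n ν).eval x ≤
      ∑ ν ∈ range (m + 1), (ν : R) * (bernsteinPolynomial R n ν).eval x := by
  have hx₁ : x ≤ 1 := hx.trans (sub_le_self 1 hx₀)
  calc ∑ ν ∈ Icc (m + 1) n, ((n - ν : ℕ) : R) * (bernsteinPolynomial R n ν).eval x
      ≤ ∑ ν ∈ Icc (m + 1) n, ((n - ν : ℕ) : R) * (bernsteinPolynomial R n ν).eval (1 - x) := by
        gcongr with ν hν
        exact eval_le_eval_one_sub (by have := (mem_Icc.mp hν).1; omega) hx₀ hx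
    _ = ∑ ν ∈ Ico (m + 1) (n + 1),
          ((n - ν : ℕ) : R) * (bernsteinPolynomial R n (n - ν)).eval x := by
        rw [Ico_add_one_right_eq_Icc]
        refine sum_congr rfl fun ν hν => ?_
        rw [eval_one_sub n ν (mem_Icc.mp hν).2]
    _ = ∑ ν ∈ range (n - m), (ν : R) * (bernsteinPolynomial R n ν).eval x := by
        rw [sum_Ico_reflect (fun j => (j : R) * (bernsteinPolynomial R n j).eval x) _ le_rfl,
          Nat.sub_self, Nat.add_sub_add_right, Nat.Ico_zero_eq_range]
    _ ≤ ∑ ν ∈ range (m + 1), (ν : R) * (bernsteinPolynomial R n ν).eval x := by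
        refine sum_le_sum_of_subset_of_nonneg (range_subset_range.mpr (by omega)) ?_
        intro ν _ _
        exact mul_nonneg (Nat.cast_nonneg ν) (eval_nonneg n ν hx₀ hx₁)

theorem sum_Icc_eval_le {R : Type*} [CommRing R] [LinearOrder R] [IsStrictOrderedRing R]
    {n m : ℕ} (hmn : m < n) (hn : n ≤ 2 * m + 1) {x : R} (hx₀ : 0 ≤ x) (hx : x ≤ 1 - x) :
    ∑ ν ∈ Icc (m + 1) n, (bernsteinPolynomial R n ν).eval x ≤ x := by
  have hn₀ : (0 : R) < n := Nat.cast_pos.mpr (by omega)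
  refine le_of_mul_le_mul_left ?_ hn₀
  calc (n : R) * ∑ ν ∈ Icc (m + 1) n, (bernsteinPolynomial R n ν).eval x
      = ∑ ν ∈ Icc (m + 1) n, (ν : R) * (bernsteinPolynomial R n ν).eval x +
          ∑ ν ∈ Icc (m + 1) n, ((n - ν : ℕ) : R) * (bernsteinPolynomial R n ν).eval x := by
        rw [mul_sum, ← sum_add_distrib]
        refine sum_congr rfl fun ν hν => ?_
        rw [Nat.cast_sub (mem_Icc.mp hν).2]
        ring
    _ ≤ ∑ ν ∈ Icc (m + 1) n, (ν : R) * (bernsteinPolynomial R n ν).eval x +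
          ∑ ν ∈ range (m + 1), (ν : R) * (bernsteinPolynomial R n ν).eval x := by
        gcongr
        exact sum_Icc_sub_mul_eval_le hn hx₀ hx
    _ = ∑ ν ∈ range (n + 1), (ν : R) * (bernsteinPolynomial R n ν).eval x := by
        rw [add_comm, ← Ico_add_one_right_eq_Icc, sum_range_add_sum_Ico _ (by omega)]
    _ = n * x := sum_natCast_mul_eval n x

end bernsteinPolynomial

theorem majority_vote_improves_general (Nf m : ℕ) (hNfodd : Odd Nf)
    (hm : m = (Nf - 1) / 2) (q : ℝ) (hq : q ∈ Set.Icc (0 : ℝ) (1 / 2)) :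
    ∑ i ∈ Finset.Icc (m + 1) Nf, (Nf.choose i : ℝ) * q ^ i * (1 - q) ^ (Nf - i) ≤ q := by
  obtain ⟨hq₀, hq₁⟩ := hq
  obtain ⟨k, rfl⟩ := hNfodd
  simpa [bernsteinPolynomial] using
    bernsteinPolynomial.sum_Icc_eval_le (m := m) (by omega) (by omega) hq₀ (by linarith)

/-- For an odd number `N_f ≥ 3` of repetitions and per-frame error probability `q ≤ 1/2`,
the majority-voting error probability does not exceed `q`:
`Σ_{i=m+1}^{N_f} C(N_f,i) qⁱ (1−q)^{N_f−i} ≤ q` with `m = (N_f−1)/2`. -/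
theorem majority_vote_improves (Nf m : ℕ) (hNfodd : Odd Nf) (hNf3 : 3 ≤ Nf)
    (hm : m = (Nf - 1) / 2) (q : ℝ) (hq : q ∈ Set.Icc (0 : ℝ) (1 / 2)) :
    ∑ i ∈ Finset.Icc (m + 1) Nf, (Nf.choose i : ℝ) * q ^ i * (1 - q) ^ (Nf - i) ≤ q :=
  majority_vote_improves_general Nf m hNfodd hm q hq
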